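/- The restriction of the Gross–Pitaevskii Hamiltonian H_V(u) = (1/4)∫(|u'|² - |u|⁴) + (1/2)∫ V|u|² to the soliton g·η with g = (a,v,γ,μ) and η = sech equals μv²/2 - μ³/6 + (μ²/2)(V * sech²(μ·))(a), i.e. H_V(g·η) = μv²/2 - μ³/6 + (μ/2)∫ V(x/μ + a) sech²(x) dx. -/

import Mathlib

open MeasureTheory Complex

noncomputable def sech (x : ℝ) : ℝ := 1 / Real.cosh x

/-- The action (g·u)(x) = e^{iγ} e^{iv(x-a)} μ u(μ(x-a)) for g = (a,v,γ,μ). -/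
noncomputable def Gact (g : ℝ × ℝ × ℝ × ℝ) (u : ℝ → ℂ) : ℝ → ℂ := fun x =>
  Complex.exp (Complex.I * g.2.2.1) *
    Complex.exp (Complex.I * g.2.1 * (x - g.1)) * g.2.2.2 * u (g.2.2.2 * (x - g.1))

/-- The Gross–Pitaevskii Hamiltonian H_V(u) = (1/4)∫(|u'|² - |u|⁴) + (1/2)∫ V|u|². -/
noncomputable def HV (V : ℝ → ℝ) (u : ℝ → ℂ) : ℝ :=
  (1/4) * (∫ x : ℝ, ‖deriv u x‖^2 - ‖u x‖^4) + (1/2) * ∫ x : ℝ, V x * ‖u x‖^2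

/-!
The soliton satisfies `|g·η|² = μ² sech²(μ(x-a))`, and since `η` is real,
`|(g·η)'|² = μ² (v² sech² + μ² sech² tanh²)` at `μ(x-a)`, with `tanh² = 1 - sech²`.
The substitution `y = μ(x-a)` reduces the Hamiltonian to `∫ sech² = 2` and `∫ sech⁴ = 4/3`,
which follow from the primitives `tanh` and `tanh - tanh³/3` on the half line by evenness.
-/

open Filter Topology Set

lemma sech_neg (x : ℝ) : sech (-x) = sech x := by
  simp [sech]

lemma tanh_sq_add_sech_sq (x : ℝ) : Real.tanh x ^ 2 + sech x ^ 2 = 1 := by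
  have := Real.cosh_sq_sub_sinh_sq x
  have := (Real.cosh_pos x).ne'
  rw [Real.tanh_eq_sinh_div_cosh, sech]
  field_simp
  linarith

lemma hasDerivAt_sech (x : ℝ) : HasDerivAt sech (-(sech x * Real.tanh x)) x := by
  have hc := (Real.cosh_pos x).ne'
  have hsech : sech = fun y => (Real.cosh y)⁻¹ := funext fun y => one_div _
  rw [hsech]
  refine ((Real.hasDerivAt_cosh x).inv hc).congr_deriv ?_
  rw [Real.tanh_eq_sinh_div_cosh]
  field_simp

lemma hasDerivAt_tanh (x : ℝ) : HasDerivAt Real.tanh (sech x ^ 2) x := by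
  have hc := (Real.cosh_pos x).ne'
  have htanh : Real.tanh = fun y => Real.sinh y / Real.cosh y :=
    funext Real.tanh_eq_sinh_div_cosh
  rw [htanh]
  refine ((Real.hasDerivAt_sinh x).div (Real.hasDerivAt_cosh x) hc).congr_deriv ?_
  rw [sech]
  field_simp
  linarith [Real.cosh_sq_sub_sinh_sq x]

lemma tanh_eq_one_sub_two_div (x : ℝ) : Real.tanh x = 1 - 2 / (Real.exp (2 * x) + 1) := by
  have h : Real.exp (2 * x) = Real.exp x * Real.exp x := by rw [two_mul, Real.exp_add]
  have := Real.exp_pos x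
  rw [Real.tanh_eq_sinh_div_cosh, Real.sinh_eq, Real.cosh_eq, h, Real.exp_neg]
  field_simp
  ring

lemma tendsto_tanh_atTop : Tendsto Real.tanh atTop (𝓝 1) := by
  have h : Tendsto (fun x : ℝ => 1 - 2 / (Real.exp (2 * x) + 1)) atTop (𝓝 (1 - 0)) :=
    tendsto_const_nhds.sub <| tendsto_const_nhds.div_atTop <|
      (Real.tendsto_exp_atTop.comp (tendsto_id.const_mul_atTop two_pos)).atTop_add
        tendsto_const_nhds
  simpa only [sub_zero, ← tanh_eq_one_sub_two_div] using h

lemma integrable_of_even_of_integrableOn_Ioi {f : ℝ → ℝ} (heven : ∀ x, f (-x) = f x)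
    (hf : IntegrableOn f (Ioi 0)) : Integrable f := by
  have hIic : IntegrableOn f (Iic 0) := by
    rw [← Measure.map_neg_eq_self (volume : Measure ℝ),
      measurableEmbedding_neg.integrableOn_map_iff]
    simp_rw [Function.comp_def, heven, neg_preimage, neg_Iic, neg_zero]
    exact (integrableOn_Ici_iff_integrableOn_Ioi).mpr hf
  rw [← integrableOn_univ, ← Iic_union_Ioi (a := (0 : ℝ))]
  exact hIic.union hf

lemma integrable_and_integral_eq_of_even {f F : ℝ → ℝ} {L : ℝ} (heven : ∀ x, f (-x) = f x)
    (hF : ∀ x, HasDerivAt F (f x) x) (hf : ∀ x, 0 ≤ f x) (hL : Tendsto F atTop (𝓝 L)) :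
    Integrable f ∧ ∫ x, f x = 2 * (L - F 0) := by
  have hcont : ContinuousWithinAt F (Ici 0) 0 := (hF 0).continuousAt.continuousWithinAt
  refine ⟨integrable_of_even_of_integrableOn_Ioi heven <|
    integrableOn_Ioi_deriv_of_nonneg hcont (fun x _ => hF x) (fun x _ => hf x) hL, ?_⟩
  calc ∫ x, f x = ∫ x, f |x| := by
        congr 1; ext x; rcases abs_choice x with h | h <;> simp only [h, heven]
    _ = 2 * (L - F 0) := by
      rw [integral_comp_abs,
        integral_Ioi_of_hasDerivAt_of_nonneg hcont (fun x _ => hF x) (fun x _ => hf x) hL]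

lemma integrable_and_integral_sech_sq :
    Integrable (fun x => sech x ^ 2) ∧ ∫ x, sech x ^ 2 = 2 := by
  have h := integrable_and_integral_eq_of_even (fun x => by rw [sech_neg]) hasDerivAt_tanh
    (fun x => sq_nonneg (sech x)) tendsto_tanh_atTop
  simpa [Real.tanh_zero] using h

lemma integrable_and_integral_sech_pow_four :
    Integrable (fun x => sech x ^ 4) ∧ ∫ x, sech x ^ 4 = 4 / 3 := by
  have hderiv (x : ℝ) :
      HasDerivAt (fun y => Real.tanh y - Real.tanh y ^ 3 / 3) (sech x ^ 4) x := by
    refine ((hasDerivAt_tanh x).sub (((hasDerivAt_tanh x).pow 3).div_const 3)).congr_deriv ?_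
    linear_combination (-(sech x ^ 2)) * tanh_sq_add_sech_sq x
  have hlim : Tendsto (fun y => Real.tanh y - Real.tanh y ^ 3 / 3) atTop (𝓝 (1 - 1 ^ 3 / 3)) :=
    tendsto_tanh_atTop.sub ((tendsto_tanh_atTop.pow 3).div_const 3)
  have h := integrable_and_integral_eq_of_even (fun x => by rw [sech_neg]) hderiv
    (fun x => by positivity) hlim
  refine ⟨h.1, ?_⟩
  rw [h.2, Real.tanh_zero]
  norm_num

lemma integral_comp_mul_sub {E : Type*} [NormedAddCommGroup E] [NormedSpace ℝ E]
    (g : ℝ → E) (μ a : ℝ) : ∫ x, g (μ * (x - a)) = |μ⁻¹| • ∫ y, g y := by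
  rw [integral_sub_right_eq_self (fun y => g (μ * y)) a, Measure.integral_comp_mul_left]

lemma norm_Gact (u : ℝ → ℂ) (a v γ μ x : ℝ) :
    ‖Gact (a, v, γ, μ) u x‖ = |μ| * ‖u (μ * (x - a))‖ := by
  simp [Gact, Complex.norm_exp]

lemma hasDerivAt_Gact {u : ℝ → ℂ} {u' : ℂ} {a v γ μ x : ℝ}
    (hu : HasDerivAt u u' (μ * (x - a))) :
    HasDerivAt (Gact (a, v, γ, μ) u)
      (Complex.exp (Complex.I * γ) * Complex.exp (Complex.I * v * (x - a)) * μ *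
        (Complex.I * v * u (μ * (x - a)) + μ * u')) x := by
  have hphase : HasDerivAt (fun y : ℝ => Complex.exp (Complex.I * v * (y - a)))
      (Complex.exp (Complex.I * v * (x - a)) * (Complex.I * v)) x := by
    have := (((hasDerivAt_id (x : ℂ)).sub_const (a : ℂ)).const_mul
      (Complex.I * v)).cexp.comp_ofReal
    simpa using this
  have hprofile : HasDerivAt (fun y : ℝ => u (μ * (y - a))) (u' * μ) x := by
    have := ((hasDerivAt_id x).sub_const a).const_mul μ
    exact hu.scomp x (by simpa using this) |>.congr_deriv (by simp [mul_comm])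
  refine ((hphase.mul hprofile).const_mul
    (Complex.exp (Complex.I * γ) * μ)).congr_deriv ?_ |>.congr_of_eventuallyEq ?_
  · ring
  · exact Eventually.of_forall fun y => by simp only [Gact, Pi.mul_apply]; ring

lemma norm_sq_deriv_Gact_ofReal {f : ℝ → ℝ} {f' : ℝ} {a v γ μ x : ℝ}
    (hf : HasDerivAt f f' (μ * (x - a))) :
    ‖deriv (Gact (a, v, γ, μ) (fun y => (f y : ℂ))) x‖ ^ 2
      = μ ^ 2 * (v ^ 2 * f (μ * (x - a)) ^ 2 + μ ^ 2 * f' ^ 2) := by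
  rw [(hasDerivAt_Gact hf.ofReal_comp).deriv]
  have hnorm : ‖Complex.I * v * f (μ * (x - a)) + μ * f'‖ ^ 2
      = v ^ 2 * f (μ * (x - a)) ^ 2 + μ ^ 2 * f' ^ 2 := by
    rw [Complex.sq_norm, Complex.normSq_apply]
    simp only [add_re, mul_re, I_re, ofReal_re, zero_mul, I_im, ofReal_im, mul_zero, sub_self,
      mul_im, one_mul, zero_add, sub_zero, add_im, add_zero]
    ring
  simp only [norm_mul, Complex.norm_exp, mul_pow, hnorm]
  simp [sq_abs]

section Soliton

variable (a v γ μ : ℝ)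

lemma norm_sq_Gact_sech (x : ℝ) :
    ‖Gact (a, v, γ, μ) (fun y => (sech y : ℂ)) x‖ ^ 2
      = μ ^ 2 * sech (μ * (x - a)) ^ 2 := by
  rw [norm_Gact, Complex.norm_real, Real.norm_eq_abs, mul_pow, sq_abs, sq_abs]

lemma norm_sq_deriv_Gact_sech (x : ℝ) :
    ‖deriv (Gact (a, v, γ, μ) (fun y => (sech y : ℂ))) x‖ ^ 2
      = (μ ^ 2 * v ^ 2 + μ ^ 4) * sech (μ * (x - a)) ^ 2 - μ ^ 4 * sech (μ * (x - a)) ^ 4 := by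
  rw [norm_sq_deriv_Gact_ofReal (hasDerivAt_sech _)]
  linear_combination μ ^ 4 * sech (μ * (x - a)) ^ 2 * tanh_sq_add_sech_sq (μ * (x - a))

variable {μ}

lemma integral_kinetic_Gact_sech (hμ : 0 < μ) :
    ∫ x, ‖deriv (Gact (a, v, γ, μ) (fun y => (sech y : ℂ))) x‖ ^ 2
        - ‖Gact (a, v, γ, μ) (fun y => (sech y : ℂ)) x‖ ^ 4
      = 2 * μ * v ^ 2 - 2 * μ ^ 3 / 3 := by
  obtain ⟨hint2, hval2⟩ := integrable_and_integral_sech_sq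
  obtain ⟨hint4, hval4⟩ := integrable_and_integral_sech_pow_four
  have hscaled {g : ℝ → ℝ} (hg : Integrable g) : Integrable fun x => g (μ * (x - a)) :=
    (hg.comp_mul_left' hμ.ne').comp_sub_right a
  have hdensity (x : ℝ) :
      ‖deriv (Gact (a, v, γ, μ) (fun y => (sech y : ℂ))) x‖ ^ 2
          - ‖Gact (a, v, γ, μ) (fun y => (sech y : ℂ)) x‖ ^ 4
        = (μ ^ 2 * v ^ 2 + μ ^ 4) * sech (μ * (x - a)) ^ 2
          - 2 * μ ^ 4 * sech (μ * (x - a)) ^ 4 := by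
    have hnorm := norm_sq_Gact_sech a v γ μ x
    rw [norm_sq_deriv_Gact_sech]
    linear_combination (-(‖Gact (a, v, γ, μ) (fun y => (sech y : ℂ)) x‖ ^ 2
      + μ ^ 2 * sech (μ * (x - a)) ^ 2)) * hnorm
  simp_rw [hdensity]
  rw [integral_sub ((hscaled hint2).const_mul _) ((hscaled hint4).const_mul _),
    integral_const_mul, integral_const_mul,
    integral_comp_mul_sub (fun y => sech y ^ 2), integral_comp_mul_sub (fun y => sech y ^ 4),
    hval2, hval4, abs_of_pos (inv_pos.2 hμ), smul_eq_mul, smul_eq_mul]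
  field_simp
  ring

lemma integral_potential_Gact_sech (V : ℝ → ℝ) (hμ : 0 < μ) :
    ∫ x, V x * ‖Gact (a, v, γ, μ) (fun y => (sech y : ℂ)) x‖ ^ 2
      = μ * ∫ x, V (x / μ + a) * sech x ^ 2 := by
  have hdensity (x : ℝ) : V x * ‖Gact (a, v, γ, μ) (fun y => (sech y : ℂ)) x‖ ^ 2
      = μ ^ 2 * (V (μ * (x - a) / μ + a) * sech (μ * (x - a)) ^ 2) := by
    rw [norm_sq_Gact_sech, mul_div_cancel_left₀ _ hμ.ne', sub_add_cancel]
    ring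
  rw [integral_congr_ae (Eventually.of_forall hdensity), integral_const_mul,
    integral_comp_mul_sub (fun y => V (y / μ + a) * sech y ^ 2), abs_of_pos (inv_pos.2 hμ),
    smul_eq_mul]
  field_simp

end Soliton

theorem GP_Hamiltonian_on_solitons_general
    (V : ℝ → ℝ) (a v γ μ : ℝ) (hμ : 0 < μ) :
    HV V (Gact (a, v, γ, μ) (fun y => (sech y : ℂ)))
      = μ * v^2 / 2 - μ^3 / 6 + (μ/2) * ∫ x : ℝ, V (x/μ + a) * (sech x)^2 := by
  rw [HV, integral_kinetic_Gact_sech a v γ hμ, integral_potential_Gact_sech a v γ V hμ]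
  ring

theorem GP_Hamiltonian_on_solitons
    (V : ℝ → ℝ) (hVc : Continuous V) (MV : ℝ) (hVb : ∀ x, |V x| ≤ MV)
    (a v γ μ : ℝ) (hμ : 0 < μ) :
    HV V (Gact (a, v, γ, μ) (fun y => (sech y : ℂ)))
      = μ * v^2 / 2 - μ^3 / 6 + (μ/2) * ∫ x : ℝ, V (x/μ + a) * (sech x)^2 :=
  GP_Hamiltonian_on_solitons_general V a v γ μ hμ
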